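/- Let M be a non-archimedean real closed field and let N be an o-minimal structure expanding the ordered field M, i.e. every N-definable subset of M is a finite union of points and open intervals (with endpoints in M or ±∞). Let X ⊆ M^k and let f : X → M be definable in N. Suppose that for every x ∈ X there is a positive integer n with 1/n < f(x) < n. Then there is a single positive integer n such that 1/n < f(x) < n for all x ∈ X. -/

import Mathlib

open Set

/-- A *structure on `M` in the sense of definability*: the collection of its definable sets
(with parameters), one family in each arity, closed under the first-order operations and
containing the graphs of addition and multiplication, the order, and all singletons
(parameters). -/
structure DefClass (M : Type*) [Field M] [LinearOrder M] [IsStrictOrderedRing M] where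
  carrier : ∀ n : ℕ, Set (Set (Fin n → M))
  mem_reindex : ∀ {m n : ℕ} (σ : Fin m → Fin n) {A : Set (Fin m → M)},
      A ∈ carrier m → {x : Fin n → M | (fun i => x (σ i)) ∈ A} ∈ carrier n
  mem_inter : ∀ {n : ℕ} {A B : Set (Fin n → M)},
      A ∈ carrier n → B ∈ carrier n → A ∩ B ∈ carrier n
  mem_compl : ∀ {n : ℕ} {A : Set (Fin n → M)}, A ∈ carrier n → Aᶜ ∈ carrier n
  mem_proj : ∀ {n : ℕ} {A : Set (Fin (n + 1) → M)}, A ∈ carrier (n + 1) →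
      {x : Fin n → M | ∃ y : M, Fin.snoc x y ∈ A} ∈ carrier n
  mem_add : {x : Fin 3 → M | x 0 + x 1 = x 2} ∈ carrier 3
  mem_mul : {x : Fin 3 → M | x 0 * x 1 = x 2} ∈ carrier 3
  mem_lt : {x : Fin 2 → M | x 0 < x 1} ∈ carrier 2
  mem_const : ∀ c : M, {x : Fin 1 → M | x 0 = c} ∈ carrier 1

variable {M : Type*} [Field M] [LinearOrder M] [IsStrictOrderedRing M]

/-- A subset of `M` is definable in the structure `S`. -/
def DefClass.DefSet1 (S : DefClass M) (A : Set M) : Prop :=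
  {x : Fin 1 → M | x 0 ∈ A} ∈ S.carrier 1

/-- A unary function is definable in the structure `S` (its graph is definable). -/
def DefClass.DefFun1 (S : DefClass M) (f : M → M) : Prop :=
  {x : Fin 2 → M | x 1 = f (x 0)} ∈ S.carrier 2

/-- An `n`-ary function is definable in the structure `S` (its graph is definable). -/
def DefClass.DefFun (S : DefClass M) {n : ℕ} (f : (Fin n → M) → M) : Prop :=
  {x : Fin (n + 1) → M | x (Fin.last n) = f (fun i => x (Fin.castSucc i))} ∈ S.carrier (n + 1)

/-- The open interval of `M` with (possibly infinite) endpoints `p.1`, `p.2`;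
`none` codes `-∞` (resp. `+∞`). -/
def ointerval (p : Option M × Option M) : Set M :=
  {x : M | (∀ a ∈ p.1, a < x) ∧ ∀ b ∈ p.2, x < b}

/-- `A` is a finite union of points and open intervals (with endpoints in `M` or `±∞`). -/
def FinUnionPtsIntervals (A : Set M) : Prop :=
  ∃ (P : Finset M) (I : Finset (Option M × Option M)),
    A = ↑P ∪ ⋃ p ∈ I, ointerval p

/-- The structure `S` is o-minimal: every definable subset of `M` is a finite union of
points and open intervals. -/
def DefClass.IsOMinimal (S : DefClass M) : Prop :=
  ∀ A : Set M, S.DefSet1 A → FinUnionPtsIntervals A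

/-- The structure `S` is polynomially bounded. -/
def DefClass.PolyBounded (S : DefClass M) : Prop :=
  ∀ f : M → M, S.DefFun1 f → ∃ (N : ℕ) (x₀ : M), ∀ x : M, x₀ ≤ x → |f x| ≤ x ^ N

/-- `M` is a non-archimedean ordered field: some element exceeds every natural number. -/
def NonArchimedean (M : Type*) [Field M] [LinearOrder M] [IsStrictOrderedRing M] : Prop :=
  ∃ c : M, ∀ n : ℕ, (n : M) < c

/-- `M` is a real closed field: every nonnegative element is a square and every polynomial
of odd degree has a root. -/
def IsRealClosedField (M : Type*) [Field M] [LinearOrder M] [IsStrictOrderedRing M] : Prop :=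
  (∀ x : M, 0 ≤ x → ∃ y : M, y ^ 2 = x) ∧
    ∀ p : Polynomial M, Odd p.natDegree → ∃ x : M, p.eval x = 0

/-!
The image `f '' X` is definable, hence a finite union of points and open intervals, and it
suffices to bound each piece. For a point this is the hypothesis. The convex set of units
`⋃ n, (1/n, n)` has no end points in `M ∪ {±∞}`: with `c` above every natural number, a right
end `+∞` or `b` above every natural number would leave the infinitely large point `max y c` or
`max y (b - 1)` in an interval through `y`, and a left end `a` below every `1/n` would leave
`min y (a + 1/c)` there. So an open interval of units has units as its ends, and these bound it.
-/

open Filter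

namespace DefClass

variable (S : DefClass M)

theorem mem_exists_append {m : ℕ} :
    ∀ {k : ℕ} {A : Set (Fin (m + k) → M)}, A ∈ S.carrier (m + k) →
      {x : Fin m → M | ∃ y : Fin k → M, Fin.append x y ∈ A} ∈ S.carrier m
  | 0, A, hA => by
    have hA' : {x : Fin m → M | ∃ y : Fin 0 → M, Fin.append x y ∈ A} = A := by
      ext x
      simp [Fin.append_right_nil x _ rfl]
    rwa [hA']
  | k + 1, A, hA => by
    convert mem_exists_append (S.mem_proj hA) using 3 with x
    constructor
    · rintro ⟨y, hy⟩
      exact ⟨Fin.init y, y (Fin.last k), by rwa [← Fin.append_snoc, Fin.snoc_init_self]⟩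
    · rintro ⟨y, b, hb⟩
      exact ⟨Fin.snoc y b, by rwa [Fin.append_snoc]⟩

theorem defSet1_image {k : ℕ} {X : Set (Fin k → M)} {f : (Fin k → M) → M}
    (hf : {x : Fin (k + 1) → M | (fun i => x (Fin.castSucc i)) ∈ X ∧
        x (Fin.last k) = f (fun i => x (Fin.castSucc i))} ∈ S.carrier (k + 1)) :
    S.DefSet1 (f '' X) := by
  rw [DefSet1]
  -- move the value coordinate to the front, then project away the arguments
  let σ : Fin (k + 1) → Fin (1 + k) := Fin.snoc (Fin.natAdd 1) (Fin.castAdd k 0)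
  convert S.mem_exists_append (S.mem_reindex σ hf) using 2 with v
  simp [σ, eq_comm]

end DefClass

section LinearOrder

variable {M : Type*} [LinearOrder M]

theorem max_mem_ointerval {p : Option M × Option M} {y c : M} (hy : y ∈ ointerval p)
    (hc : ∀ b ∈ p.2, c < b) : max y c ∈ ointerval p :=
  ⟨fun a ha => (hy.1 a ha).trans_le (le_max_left y c), fun b hb => max_lt (hy.2 b hb) (hc b hb)⟩

theorem min_mem_ointerval {p : Option M × Option M} {y c : M} (hy : y ∈ ointerval p)
    (hc : ∀ a ∈ p.1, a < c) : min y c ∈ ointerval p :=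
  ⟨fun a ha => lt_min (hy.1 a ha) (hc a ha), fun b hb => (min_le_left y c).trans_lt (hy.2 b hb)⟩

theorem exists_mem_ointerval_subset_Iio {L : Set M} (hL : IsLowerSet L) (hLc : Lᶜ.Nonempty)
    (hLc_min : ∀ b ∉ L, ∃ b' < b, b' ∉ L) {p : Option M × Option M}
    (hne : (ointerval p).Nonempty) (hsub : ointerval p ⊆ L) :
    ∃ b ∈ L, ointerval p ⊆ Iio b := by
  obtain ⟨y, hy⟩ := hne
  suffices ∃ b ∈ p.2, b ∈ L from
    let ⟨b, hb, hbL⟩ := this; ⟨b, hbL, fun z hz => hz.2 b hb⟩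
  by_contra! hout
  obtain ⟨c, hcL, hc⟩ : ∃ c ∉ L, ∀ b ∈ p.2, c < b := by
    rcases hp : p.2 with _ | b
    · obtain ⟨c, hc⟩ := hLc
      exact ⟨c, hc, by simp⟩
    · obtain ⟨b', hb', hb'L⟩ := hLc_min b (hout b (by simp [hp]))
      exact ⟨b', hb'L, by simpa using hb'⟩
  exact hcL (hL (le_max_right y c) (hsub (max_mem_ointerval hy hc)))

theorem exists_mem_ointerval_subset_Ioi {L : Set M} (hL : IsUpperSet L) (hLc : Lᶜ.Nonempty)
    (hLc_max : ∀ a ∉ L, ∃ a' > a, a' ∉ L) {p : Option M × Option M}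
    (hne : (ointerval p).Nonempty) (hsub : ointerval p ⊆ L) :
    ∃ a ∈ L, ointerval p ⊆ Ioi a := by
  obtain ⟨y, hy⟩ := hne
  suffices ∃ a ∈ p.1, a ∈ L from
    let ⟨a, ha, haL⟩ := this; ⟨a, haL, fun z hz => hz.1 a ha⟩
  by_contra! hout
  obtain ⟨c, hcL, hc⟩ : ∃ c ∉ L, ∀ a ∈ p.1, a < c := by
    rcases hp : p.1 with _ | a
    · obtain ⟨c, hc⟩ := hLc
      exact ⟨c, hc, by simp⟩
    · obtain ⟨a', ha', ha'L⟩ := hLc_max a (hout a (by simp [hp]))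
      exact ⟨a', ha'L, by simpa using ha'⟩
  exact hcL (hL (min_le_right y c) (hsub (min_mem_ointerval hy hc)))

end LinearOrder

theorem monotone_Ioo_one_div_nat : Monotone fun n : ℕ => Ioo (1 / (n : M)) n := by
  intro m n hmn y ⟨hmy, hym⟩
  have hm : (0 : M) < m := Nat.cast_pos.2 <| Nat.pos_of_ne_zero <| by
    rintro rfl
    simp only [Nat.cast_zero, div_zero] at hmy hym
    exact lt_asymm hmy hym
  exact ⟨(one_div_le_one_div_of_le hm (by exact_mod_cast hmn)).trans_lt hmy,
    hym.trans_le (by exact_mod_cast hmn)⟩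

theorem eventually_mem_Ioo_one_div_nat {y : M} (h : ∃ n : ℕ, 0 < n ∧ 1 / (n : M) < y ∧ y < n) :
    ∀ᶠ n : ℕ in atTop, y ∈ Ioo (1 / (n : M)) n :=
  let ⟨m, _, hm⟩ := h
  eventually_atTop.2 ⟨m, fun _ hn => monotone_Ioo_one_div_nat hn hm⟩

theorem exists_nat_ointerval_subset_Iio (h_na : NonArchimedean M) {p : Option M × Option M}
    (hne : (ointerval p).Nonempty) (h : ∀ y ∈ ointerval p, ∃ n : ℕ, y < n) :
    ∃ n : ℕ, ointerval p ⊆ Iio (n : M) := by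
  obtain ⟨c, hc⟩ := h_na
  obtain ⟨b, ⟨n, hbn⟩, hb⟩ := exists_mem_ointerval_subset_Iio (L := {y : M | ∃ n : ℕ, y < n})
    (fun _ _ hyz ⟨n, hn⟩ => ⟨n, hyz.trans_lt hn⟩) ⟨c, fun ⟨n, hn⟩ => lt_asymm hn (hc n)⟩
    (fun b hb => ⟨b - 1, by linarith, fun ⟨n, hn⟩ => hb ⟨n + 1, by push_cast; linarith⟩⟩) hne h
  exact ⟨n, fun y hy => (hb hy).trans hbn⟩

theorem exists_nat_ointerval_subset_Ioi (h_na : NonArchimedean M) {p : Option M × Option M}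
    (hne : (ointerval p).Nonempty) (h : ∀ y ∈ ointerval p, ∃ n : ℕ, 0 < n ∧ 1 / (n : M) < y) :
    ∃ n : ℕ, 0 < n ∧ ointerval p ⊆ Ioi (1 / (n : M)) := by
  obtain ⟨c, hc⟩ := h_na
  have hc_pos : 0 < c := by simpa using hc 0
  set L := {y : M | ∃ n : ℕ, 0 < n ∧ 1 / (n : M) < y}
  have hL : IsUpperSet L := fun _ _ hyz ⟨n, hn, h⟩ => ⟨n, hn, h.trans_le hyz⟩
  have h0 : (0 : M) ∉ L := fun ⟨_, _, h⟩ => h.not_ge (by positivity)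
  -- `1 / c` is infinitesimal, so it cannot lift a lower bound of all `1 / n` above one of them
  have h_shift : ∀ a ∉ L, a + 1 / c ∉ L := by
    rintro a ha ⟨n, hn, h⟩
    have ha' : a ≤ 1 / ((2 * n : ℕ) : M) := not_lt.1 fun h' => ha ⟨2 * n, by omega, h'⟩
    have h2n : 1 / c < 1 / ((2 * n : ℕ) : M) :=
      one_div_lt_one_div_of_lt (by positivity) (hc (2 * n))
    have h_half : 1 / ((2 * n : ℕ) : M) + 1 / ((2 * n : ℕ) : M) = 1 / n := by
      push_cast; ring
    linarith
  obtain ⟨a, ⟨n, hn, hna⟩, ha⟩ := exists_mem_ointerval_subset_Ioi hL ⟨0, h0⟩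
    (fun a ha => ⟨a + 1 / c, lt_add_of_pos_right a (one_div_pos.2 hc_pos), h_shift a ha⟩) hne h
  exact ⟨n, hn, fun y hy => hna.trans (ha hy)⟩

theorem eventually_ointerval_subset_Ioo_one_div_nat (h_na : NonArchimedean M)
    {p : Option M × Option M} (h : ∀ y ∈ ointerval p, ∀ᶠ n : ℕ in atTop, y ∈ Ioo (1 / (n : M)) n) :
    ∀ᶠ n : ℕ in atTop, ointerval p ⊆ Ioo (1 / (n : M)) n := by
  rcases (ointerval p).eq_empty_or_nonempty with hp | hne
  · simp [hp]
  obtain ⟨m, hm⟩ := exists_nat_ointerval_subset_Iio h_na hne fun y hy =>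
    ((h y hy).exists).imp fun _ hn => hn.2
  obtain ⟨m', hm'_pos, hm'⟩ := exists_nat_ointerval_subset_Ioi h_na hne fun y hy =>
    ((h y hy).and (eventually_gt_atTop 0)).exists.imp fun _ hn => ⟨hn.2, hn.1.1⟩
  filter_upwards [eventually_ge_atTop m, eventually_ge_atTop m'] with n hmn hm'n y hy
  exact ⟨(one_div_le_one_div_of_le (by exact_mod_cast hm'_pos) (by exact_mod_cast hm'n)).trans_lt
    (hm' hy), (hm hy).trans_le (by exact_mod_cast hmn)⟩

theorem FinUnionPtsIntervals.eventually_subset_Ioo_one_div_nat (h_na : NonArchimedean M)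
    {A : Set M} (hA : FinUnionPtsIntervals A)
    (h : ∀ y ∈ A, ∀ᶠ n : ℕ in atTop, y ∈ Ioo (1 / (n : M)) n) :
    ∀ᶠ n : ℕ in atTop, A ⊆ Ioo (1 / (n : M)) n := by
  obtain ⟨P, I, rfl⟩ := hA
  simp only [union_subset_iff, iUnion₂_subset_iff]
  refine (eventually_all_finset P).2 (fun q hq => ?_) |>.and <|
    (eventually_all_finset I).2 fun p hp => eventually_ointerval_subset_Ioo_one_div_nat h_na ?_
  · exact h q (Or.inl hq)
  · exact fun y hy => h y (Or.inr (mem_biUnion hp hy))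

theorem definable_unit_valued_is_unit_general {M : Type*} [Field M] [LinearOrder M] [IsStrictOrderedRing M]
    (h_na : NonArchimedean M)
    (N : DefClass M) (h_omin : N.IsOMinimal)
    {k : ℕ} (X : Set (Fin k → M)) (f : (Fin k → M) → M)
    (hf : {x : Fin (k + 1) → M | (fun i => x (Fin.castSucc i)) ∈ X ∧
        x (Fin.last k) = f (fun i => x (Fin.castSucc i))} ∈ N.carrier (k + 1))
    (h_unit_vals : ∀ x ∈ X, ∃ n : ℕ, 0 < n ∧ 1 / (n : M) < f x ∧ f x < n) :
    ∃ n : ℕ, 0 < n ∧ ∀ x ∈ X, 1 / (n : M) < f x ∧ f x < n := by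
  have h_bound : ∀ᶠ n : ℕ in atTop, f '' X ⊆ Ioo (1 / (n : M)) n :=
    (h_omin _ (N.defSet1_image hf)).eventually_subset_Ioo_one_div_nat h_na <| by
      rintro _ ⟨x, hx, rfl⟩
      exact eventually_mem_Ioo_one_div_nat (h_unit_vals x hx)
  obtain ⟨n, h_sub, hn⟩ := (h_bound.and (eventually_gt_atTop 0)).exists
  exact ⟨n, hn, fun x hx => h_sub (mem_image_of_mem f hx)⟩

/-- **Proposition 3.1 of the paper.** Let `M` be a non-archimedean real closed field and
let `N` be an o-minimal structure expanding the ordered field `M`. Let `X ⊆ M^k` and let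
`f : X → M` be definable in `N` (i.e. `X` and the graph of `f` on `X` are definable).
If for every `x ∈ X` there is a positive integer `n` with `1/n < f x < n`, then there is a
single positive integer `n` such that `1/n < f x < n` for all `x ∈ X`. -/
theorem definable_unit_valued_is_unit {M : Type*} [Field M] [LinearOrder M] [IsStrictOrderedRing M]
    (h_na : NonArchimedean M) (h_rc : IsRealClosedField M)
    (N : DefClass M) (h_omin : N.IsOMinimal)
    {k : ℕ} (X : Set (Fin k → M)) (f : (Fin k → M) → M)
    (hX : X ∈ N.carrier k)
    (hf : {x : Fin (k + 1) → M | (fun i => x (Fin.castSucc i)) ∈ X ∧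
        x (Fin.last k) = f (fun i => x (Fin.castSucc i))} ∈ N.carrier (k + 1))
    (h_unit_vals : ∀ x ∈ X, ∃ n : ℕ, 0 < n ∧ 1 / (n : M) < f x ∧ f x < n) :
    ∃ n : ℕ, 0 < n ∧ ∀ x ∈ X, 1 / (n : M) < f x ∧ f x < n :=
  definable_unit_valued_is_unit_general h_na N h_omin X f hf h_unit_vals
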